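/- arXiv:1310.5066 — 2 statements merged into one kernel-verified Lean document; each statement's English description precedes it below -/
import Mathlib

section
/- On the flat hyperbolic affine hypersphere x⁰ of dimension n₀ (Example 4.4), with affine metric g_{λμ} = ((λ+1)/λ)·c·δ_{λμ} where c = (C₀²/(n₀+1))^{1/(n₀+2)}, and Fubini–Pick components A_{λλλ} = −((λ²−1)/λ²)·c, A_{λλν} = ((λ+1)/(λν))·c for λ < ν, A_{λμν} = 0 otherwise (symmetric in all indices), the Pick invariant J = (1/(n₀(n₀−1)))·Σ g^{λ₁λ₂}g^{μ₁μ₂}g^{ν₁ν₂}A_{λ₁μ₁ν₁}A_{λ₂μ₂ν₂} equals (n₀+1)^{−(n₀+1)/(n₀+2)}·C₀^{−2/(n₀+2)}. -/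
/-!
The inverse metric is diagonal, so `J` is a weighted sum of the squares `A_{λμν}²`, and `A`
vanishes on triples of distinct indices. For a symmetric tensor with that support,
inclusion–exclusion over the three diagonals `{λ = μ}`, `{μ = ν}`, `{λ = ν}` gives
`∑_{λμν} = 3 ∑_{λν} (λλν-term) - 2 ∑_λ (λλλ-term)`. With `w_λ = λ / ((λ + 1) c)` one has
`w_λ³ A_{λλλ}² = (λ - 1)² / (λ (λ + 1) c)` and `w_λ² w_ν A_{λλν}² = 1 / (ν (ν + 1) c)` for `λ < ν`,
so the full sum is `n₀ (n₀ - 1) / ((n₀ + 1) c)`, i.e. `J = 1 / ((n₀ + 1) c)`, and the value of `c`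
turns this into the stated power of `n₀ + 1` and `C₀`.
-/

open Finset

theorem sum_sum_ite_eq_mul {α R : Type*} [DecidableEq α] [NonUnitalNonAssocSemiring R]
    (s : Finset α) (w : α → R) (f : α → α → R) :
    ∑ a ∈ s, ∑ b ∈ s, (if a = b then w a else 0) * f a b = ∑ a ∈ s, w a * f a a := by
  refine sum_congr rfl fun a ha => ?_
  simp only [ite_mul, zero_mul]
  rw [sum_ite_eq, if_pos ha]

theorem sum_diagonal_contraction {α R : Type*} [DecidableEq α] [NonUnitalSemiring R]
    (s : Finset α) (w : α → R) (T U : α → α → α → R) :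
    ∑ l₁ ∈ s, ∑ l₂ ∈ s, ∑ m₁ ∈ s, ∑ m₂ ∈ s, ∑ v₁ ∈ s, ∑ v₂ ∈ s,
        (if l₁ = l₂ then w l₁ else 0) * (if m₁ = m₂ then w m₁ else 0) *
          (if v₁ = v₂ then w v₁ else 0) * T l₁ m₁ v₁ * U l₂ m₂ v₂ =
      ∑ l ∈ s, ∑ m ∈ s, ∑ v ∈ s, w l * w m * w v * T l m v * U l m v := by
  simp only [← mul_sum, sum_sum_ite_eq_mul, mul_assoc]

theorem sum_sum_sum_eq_of_symmetric {α M : Type*} [DecidableEq α] [AddCommGroup M]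
    (s : Finset α) (F : α → α → α → M) (h₁₂ : ∀ a b c, F a b c = F b a c)
    (h₂₃ : ∀ a b c, F a b c = F a c b)
    (hF : ∀ a b c, a ≠ b → b ≠ c → a ≠ c → F a b c = 0) :
    ∑ a ∈ s, ∑ b ∈ s, ∑ c ∈ s, F a b c =
      3 • ∑ a ∈ s, ∑ b ∈ s, F a a b - 2 • ∑ a ∈ s, F a a a := by
  have key : ∀ a b c, F a b c = (if a = b then F a b c else 0) + (if b = c then F a b c else 0)
      + (if a = c then F a b c else 0) - 2 • (if a = b ∧ b = c then F a b c else 0) := by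
    intro a b c
    by_cases hab : a = b <;> by_cases hbc : b = c <;> by_cases hac : a = c <;>
      simp_all [two_nsmul]
  have hbb : ∑ a ∈ s, ∑ b ∈ s, F a b b = ∑ a ∈ s, ∑ b ∈ s, F a a b := by
    rw [sum_comm]
    exact sum_congr rfl fun b _ => sum_congr rfl fun a _ => by rw [h₁₂, h₂₃]
  have hba : ∑ a ∈ s, ∑ b ∈ s, F a b a = ∑ a ∈ s, ∑ b ∈ s, F a a b :=
    sum_congr rfl fun a _ => sum_congr rfl fun b _ => h₂₃ a b a
  conv_lhs =>
    rw [sum_congr rfl fun a _ => sum_congr rfl fun b _ => sum_congr rfl fun c _ => key a b c]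
  simp +contextual only [sum_add_distrib, sum_sub_distrib, ← smul_sum, sum_ite_irrel,
    sum_const_zero, sum_ite_eq, ite_and, if_true]
  rw [hbb, hba]
  abel

theorem sum_Icc_eq_card_smul_add {M : Type*} [AddCommMonoid M] {n v : ℕ} (hv : v ∈ Icc 1 n)
    (f : ℕ → M) (e : M) (hlt : ∀ l ∈ Icc 1 n, l < v → f l = e)
    (hgt : ∀ l ∈ Icc 1 n, v < l → f l = 0) :
    ∑ l ∈ Icc 1 n, f l = (v - 1) • e + f v := by
  obtain ⟨hv1, hvn⟩ := mem_Icc.mp hv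
  have hsub : Icc 1 v ⊆ Icc 1 n := Icc_subset_Icc_right hvn
  rw [← sum_subset hsub fun l hl hlv => hgt l hl (by simp_all), ← Ico_insert_right hv1,
    sum_insert (by simp), add_comm,
    sum_congr rfl fun l hl => hlt l (hsub (Ico_subset_Icc_self hl)) (mem_Ico.mp hl).2]
  simp

theorem sum_Icc_pick (n : ℕ) {c : ℝ} (hc : c ≠ 0) :
    ∑ v ∈ Icc 1 n, (3 * ((v - 1) / ((v + 1) * c)) - 2 * ((v - 1) ^ 2 / (v * (v + 1) * c))) =
      n * (n - 1) / ((n + 1) * c) := by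
  induction n with
  | zero => simp
  | succ n ih =>
    rw [sum_Icc_succ_top (by omega), ih]
    push_cast
    field_simp
    ring

theorem inv_mul_div_rpow {x C e : ℝ} (hx : 0 < x) (hC : 0 < C) (he : e ≠ 0) :
    (x * (C ^ 2 / x) ^ (1 / e))⁻¹ = x ^ (-((e - 1) / e)) * C ^ (-2 / e) := by
  have hC2 : (C ^ 2) ^ (1 / e) = C ^ (2 / e) := by
    rw [← Real.rpow_natCast, ← Real.rpow_mul hC.le]; congr 1; push_cast; ring
  have hx' : x ^ (-((e - 1) / e)) = x ^ (1 / e) / x := by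
    rw [show -((e - 1) / e) = 1 / e - 1 by field_simp; ring, Real.rpow_sub_one hx.ne']
  rw [Real.div_rpow (by positivity) hx.le, hC2, hx', neg_div, Real.rpow_neg hC.le]
  have : 0 < x ^ (1 / e) := by positivity
  have : 0 < C ^ (2 / e) := by positivity
  field_simp

noncomputable def invMetricDiag (c : ℝ) (l : ℕ) : ℝ := l / ((l + 1) * c)

section PickTensor

variable {n : ℕ} {c : ℝ} {A : ℕ → ℕ → ℕ → ℝ}

theorem pick_term_diag (hc : c ≠ 0)
    (hdiag : ∀ l ∈ Icc 1 n, A l l l = -(((l : ℝ)^2 - 1) / (l : ℝ)^2) * c)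
    {v : ℕ} (hv : v ∈ Icc 1 n) :
    invMetricDiag c v * invMetricDiag c v * invMetricDiag c v * A v v v * A v v v =
      (v - 1) ^ 2 / (v * (v + 1) * c) := by
  have hv0 : (v : ℝ) ≠ 0 := by have := (mem_Icc.mp hv).1; positivity
  rw [hdiag v hv, invMetricDiag]
  field_simp
  ring

theorem sum_pick_term_pair (hc : c ≠ 0)
    (hdiag : ∀ l ∈ Icc 1 n, A l l l = -(((l : ℝ)^2 - 1) / (l : ℝ)^2) * c)
    (hoff : ∀ l ∈ Icc 1 n, ∀ v ∈ Icc 1 n, l < v →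
      A l l v = ((l : ℝ) + 1) / ((l : ℝ) * (v : ℝ)) * c)
    (hzero2 : ∀ l v, l < v → A v v l = 0) {v : ℕ} (hv : v ∈ Icc 1 n) :
    ∑ l ∈ Icc 1 n, invMetricDiag c l * invMetricDiag c l * invMetricDiag c v * A l l v * A l l v =
      (v - 1) / ((v + 1) * c) := by
  have hv0 : (v : ℝ) ≠ 0 := by have := (mem_Icc.mp hv).1; positivity
  rw [sum_Icc_eq_card_smul_add hv _ (1 / (v * (v + 1) * c)), pick_term_diag hc hdiag hv]
  · rw [nsmul_eq_mul, Nat.cast_sub (mem_Icc.mp hv).1]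
    field_simp
    ring
  · intro l hl hlv
    have hl0 : (l : ℝ) ≠ 0 := by have := (mem_Icc.mp hl).1; positivity
    rw [hoff l hl v hv hlv, invMetricDiag, invMetricDiag]
    field_simp
  · intro l _ hvl
    simp [hzero2 v l hvl]

end PickTensor

/-- The Pick invariant of the flat hyperbolic affine hypersphere
`x¹⋯x^{n₀+1} = C₀` equals `(n₀+1)^{−(n₀+1)/(n₀+2)} C₀^{−2/(n₀+2)}`. -/
theorem stmt_13 (n₀ : ℕ) (hn : 2 ≤ n₀) (C₀ : ℝ) (hC₀ : 0 < C₀)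
    (c : ℝ) (hc : c = (C₀ ^ 2 / ((n₀ : ℝ) + 1)) ^ ((1 : ℝ) / ((n₀ : ℝ) + 2)))
    (A : ℕ → ℕ → ℕ → ℝ)
    (hsym1 : ∀ l m v, A l m v = A m l v) (hsym2 : ∀ l m v, A l m v = A l v m)
    (hdiag : ∀ l ∈ Finset.Icc 1 n₀, A l l l = -(((l : ℝ)^2 - 1) / (l : ℝ)^2) * c)
    (hoff : ∀ l ∈ Finset.Icc 1 n₀, ∀ v ∈ Finset.Icc 1 n₀, l < v →
      A l l v = ((l : ℝ) + 1) / ((l : ℝ) * (v : ℝ)) * c)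
    (hzero1 : ∀ l m v, l ≠ m → m ≠ v → l ≠ v → A l m v = 0)
    (hzero2 : ∀ l v, l < v → A v v l = 0)
    (gInv : ℕ → ℕ → ℝ)
    (hg : ∀ l m, gInv l m = if l = m then (l : ℝ) / (((l : ℝ) + 1) * c) else 0)
    (J : ℝ)
    (hJ : J = (1 / ((n₀ : ℝ) * ((n₀ : ℝ) - 1))) *
      ∑ l1 ∈ Finset.Icc 1 n₀, ∑ l2 ∈ Finset.Icc 1 n₀, ∑ m1 ∈ Finset.Icc 1 n₀,
        ∑ m2 ∈ Finset.Icc 1 n₀, ∑ v1 ∈ Finset.Icc 1 n₀, ∑ v2 ∈ Finset.Icc 1 n₀,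
          gInv l1 l2 * gInv m1 m2 * gInv v1 v2 * A l1 m1 v1 * A l2 m2 v2) :
    J = ((n₀ : ℝ) + 1) ^ (-(((n₀ : ℝ) + 1) / ((n₀ : ℝ) + 2)))
        * C₀ ^ (-(2 : ℝ) / ((n₀ : ℝ) + 2)) := by
  have hc0 : c ≠ 0 := by rw [hc]; positivity
  have hn' : (2 : ℝ) ≤ n₀ := by exact_mod_cast hn
  have hn0 : (n₀ : ℝ) ≠ 0 := by linarith
  have hn1 : (n₀ : ℝ) - 1 ≠ 0 := by linarith
  set F : ℕ → ℕ → ℕ → ℝ := fun l m v =>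
    invMetricDiag c l * invMetricDiag c m * invMetricDiag c v * A l m v * A l m v with hF
  have hsum : ∑ l ∈ Icc 1 n₀, ∑ m ∈ Icc 1 n₀, ∑ v ∈ Icc 1 n₀, F l m v =
      n₀ * (n₀ - 1) / ((n₀ + 1) * c) := by
    rw [sum_sum_sum_eq_of_symmetric _ F (fun l m v => by simp only [hF, hsym1 l m v]; ring)
      (fun l m v => by simp only [hF, hsym2 l m v]; ring)
      (fun l m v hlm hmv hlv => by simp only [hF, hzero1 l m v hlm hmv hlv, mul_zero]),
      sum_comm, sum_congr rfl fun v hv => sum_pick_term_pair hc0 hdiag hoff hzero2 hv,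
      sum_congr rfl fun v hv => pick_term_diag hc0 hdiag hv, nsmul_eq_mul, nsmul_eq_mul,
      mul_sum, mul_sum, ← sum_sub_distrib]
    exact_mod_cast sum_Icc_pick n₀ hc0
  have hJc : J = ((n₀ + 1) * c)⁻¹ := by
    rw [hJ, show gInv = fun l m => if l = m then invMetricDiag c l else 0 from funext₂ hg,
      sum_diagonal_contraction, hsum]
    field_simp
  rw [hJc, hc, inv_mul_div_rpow (by positivity) hC₀ (by positivity),
    show (n₀ : ℝ) + 2 - 1 = n₀ + 1 by ring]
end

section
/- Let C > 0, L₁ = −1/(f_K C), and for α = 1,...,s let H_α be the vector −(f_{α̃−1}/(f_{α̃}C))·∂/∂t^{α̃−1} + (1/C)·Σ_{β=α}^{s−1} ((n_{β+1}+1)/f_{β̃+1})·∂/∂t^{β̃}, measured in the diagonal metric g with g(∂/∂t^λ, ∂/∂t^μ) = (f_{λ+1}C/((n_{λ+1}+1)f_λ))·δ_{λμ}. Then g(H_α, H_α) = ((n−n_α)/(n_α+1))·(−L₁) and g(H_α, H_β) = L₁ for α ≠ β. -/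
/-! Write `m_λ = f_{λ+1} - f_λ = n_{λ+1} + 1`. The metric weight of `∂_λ` times the square of the
tail coefficient `m_λ / (C f_{λ+1})` of `H_α` is `1/(C f_λ) - 1/(C f_{λ+1})`, so for `α ≤ β` the
tail part of `g(H_α, H_β)` telescopes to `1/(C f_{β̃}) - 1/(C f_K)`. The single remaining term,
at `λ = β̃ - 1`, is `f_{α̃-1} / (m_{α̃} f_{α̃} C)` when `α = β` and `-1/(C f_{β̃})` when `α < β`. -/

namespace CalabiComposition

open Finset

theorem sum_Icc_one_pred_eq_add_sum_Ico {M : Type*} [AddCommMonoid M] {g : ℕ → M} {b K : ℕ}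
    (hb : 1 ≤ b) (hbK : b ≤ K) (h0 : g 0 = 0) (hlow : ∀ l < b - 1, g l = 0) :
    ∑ l ∈ Icc 1 (K - 1), g l = g (b - 1) + ∑ l ∈ Ico b K, g l := by
  have hIcc : Icc 1 (K - 1) = Ico 1 K := by ext; simp only [mem_Icc, mem_Ico]; omega
  rw [hIcc, ← zero_add (∑ l ∈ Ico 1 K, g l), ← h0, ← sum_eq_sum_Ico_succ_bot (by omega),
    ← sum_Ico_consecutive g (Nat.zero_le (b - 1)) (by omega : b - 1 ≤ K),
    sum_eq_zero fun l hl => hlow l (mem_Ico.1 hl).2, zero_add,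
    sum_eq_sum_Ico_succ_bot (by omega), Nat.sub_add_cancel hb]

noncomputable section

variable (F : ℕ → ℝ) (C : ℝ)

def metricWeight (l : ℕ) : ℝ := F (l + 1) * C / ((F (l + 1) - F l) * F l)

def tailCoeff (l : ℕ) : ℝ := 1 / C * ((F (l + 1) - F l) / F (l + 1))

def diagMetric (K : ℕ) (u v : ℕ → ℝ) : ℝ :=
  ∑ l ∈ Icc 1 (K - 1), metricWeight F C l * u l * v l

/-- The paper's `H_α`, indexed by `a = α̃ = α + r`. -/
def meanCurvatureVector (K a l : ℕ) : ℝ :=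
  (if l = a - 1 then -(F (a - 1) / (F a * C)) else 0)
    + (if a ≤ l ∧ l ≤ K - 1 then tailCoeff F C l else 0)

variable {F C}

theorem diagMetric_comm (K : ℕ) (u v : ℕ → ℝ) : diagMetric F C K u v = diagMetric F C K v u :=
  sum_congr rfl fun _ _ => by ring

theorem metricWeight_mul_head_sq {l : ℕ} (h0 : 0 ≤ F l) (h1 : F l < F (l + 1)) (hC : C ≠ 0) :
    metricWeight F C l * (-(F l / (F (l + 1) * C))) * (-(F l / (F (l + 1) * C)))
      = F l / ((F (l + 1) - F l) * F (l + 1) * C) := by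
  rcases h0.eq_or_lt with h0 | h0
  · simp [← h0]
  have : F (l + 1) - F l ≠ 0 := by linarith
  unfold metricWeight
  field_simp

theorem metricWeight_mul_tail_mul_head {l : ℕ} (h0 : 0 < F l) (h1 : F l < F (l + 1))
    (hC : C ≠ 0) :
    metricWeight F C l * tailCoeff F C l * (-(F l / (F (l + 1) * C))) = -(1 / (C * F (l + 1))) := by
  have : F (l + 1) - F l ≠ 0 := by linarith
  have : F (l + 1) ≠ 0 := by linarith
  unfold metricWeight tailCoeff
  field_simp

theorem metricWeight_mul_tail_sq {l : ℕ} (h0 : 0 < F l) (h1 : F l < F (l + 1)) (hC : C ≠ 0) :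
    metricWeight F C l * tailCoeff F C l * tailCoeff F C l
      = 1 / (C * F l) - 1 / (C * F (l + 1)) := by
  have : F (l + 1) - F l ≠ 0 := by linarith
  have : F (l + 1) ≠ 0 := by linarith
  unfold metricWeight tailCoeff
  field_simp

theorem sum_Ico_metricWeight_mul_tail_sq (hF : StrictMono F) (hC : C ≠ 0) {a K : ℕ}
    (ha : 0 < F a) (haK : a ≤ K) :
    ∑ l ∈ Ico a K, metricWeight F C l * tailCoeff F C l * tailCoeff F C l
      = 1 / (C * F a) - 1 / (C * F K) := by
  have hterm : ∀ l ∈ Ico a K, metricWeight F C l * tailCoeff F C l * tailCoeff F C l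
      = -(1 / (C * F (l + 1))) - -(1 / (C * F l)) := fun l hl => by
    have hl : 0 < F l := ha.trans_le (hF.monotone (mem_Ico.1 hl).1)
    rw [metricWeight_mul_tail_sq hl (hF l.lt_succ_self) hC]
    ring
  rw [sum_congr rfl hterm, sum_Ico_sub (fun l => -(1 / (C * F l))) haK]
  ring

theorem meanCurvatureVector_zero (hF0 : F 0 = 0) {K a : ℕ} (ha : 1 ≤ a) :
    meanCurvatureVector F C K a 0 = 0 := by
  rw [meanCurvatureVector, if_neg (show ¬(a ≤ 0 ∧ 0 ≤ K - 1) by omega), add_zero]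
  split_ifs with h
  · rw [← h, hF0, zero_div, neg_zero]
  · rfl

theorem meanCurvatureVector_of_lt {K a l : ℕ} (hl : l < a - 1) :
    meanCurvatureVector F C K a l = 0 := by
  rw [meanCurvatureVector, if_neg (by omega), if_neg (by omega), add_zero]

theorem meanCurvatureVector_pred {K a : ℕ} (ha : 1 ≤ a) :
    meanCurvatureVector F C K a (a - 1) = -(F (a - 1) / (F a * C)) := by
  rw [meanCurvatureVector, if_pos rfl, if_neg (by omega), add_zero]

theorem meanCurvatureVector_of_le {K a l : ℕ} (ha : 1 ≤ a) (hal : a ≤ l) (hlK : l < K) :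
    meanCurvatureVector F C K a l = tailCoeff F C l := by
  rw [meanCurvatureVector, if_neg (by omega), if_pos (by omega), zero_add]

theorem diagMetric_meanCurvatureVector_self (hF : StrictMono F) (hF0 : F 0 = 0) (hC : C ≠ 0)
    {K a : ℕ} (ha : 1 ≤ a) (haK : a ≤ K) :
    diagMetric F C K (meanCurvatureVector F C K a) (meanCurvatureVector F C K a)
      = 1 / ((F a - F (a - 1)) * C) - 1 / (C * F K) := by
  have hFa : 0 < F a := hF0 ▸ hF (by omega : 0 < a)
  have htail : ∀ l ∈ Ico a K, metricWeight F C l * meanCurvatureVector F C K a l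
      * meanCurvatureVector F C K a l = metricWeight F C l * tailCoeff F C l * tailCoeff F C l :=
    fun l hl => by rw [meanCurvatureVector_of_le ha (mem_Ico.1 hl).1 (mem_Ico.1 hl).2]
  rw [diagMetric, sum_Icc_one_pred_eq_add_sum_Ico ha haK
      (by rw [meanCurvatureVector_zero hF0 ha, mul_zero])
      (fun l hl => by rw [meanCurvatureVector_of_lt hl, mul_zero]),
    sum_congr rfl htail, sum_Ico_metricWeight_mul_tail_sq hF hC hFa haK,
    meanCurvatureVector_pred ha]
  obtain ⟨p, rfl⟩ : ∃ p, a = p + 1 := ⟨a - 1, by omega⟩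
  rw [Nat.add_sub_cancel,
    metricWeight_mul_head_sq (hF0 ▸ hF.monotone p.zero_le) (hF p.lt_succ_self) hC]
  have : F (p + 1) - F p ≠ 0 := sub_ne_zero.2 (hF p.lt_succ_self).ne'
  field_simp
  ring

theorem diagMetric_meanCurvatureVector_of_lt (hF : StrictMono F) (hF0 : F 0 = 0) (hC : C ≠ 0)
    {K a b : ℕ} (ha : 1 ≤ a) (hab : a < b) (hbK : b ≤ K) :
    diagMetric F C K (meanCurvatureVector F C K a) (meanCurvatureVector F C K b)
      = -(1 / (C * F K)) := by
  have hb : 1 ≤ b := by omega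
  have hFb : 0 < F b := hF0 ▸ hF (by omega : 0 < b)
  have htail : ∀ l ∈ Ico b K, metricWeight F C l * meanCurvatureVector F C K a l
      * meanCurvatureVector F C K b l = metricWeight F C l * tailCoeff F C l * tailCoeff F C l :=
    fun l hl => by
      rw [meanCurvatureVector_of_le ha (hab.le.trans (mem_Ico.1 hl).1) (mem_Ico.1 hl).2,
        meanCurvatureVector_of_le hb (mem_Ico.1 hl).1 (mem_Ico.1 hl).2]
  rw [diagMetric, sum_Icc_one_pred_eq_add_sum_Ico hb hbK
      (by rw [meanCurvatureVector_zero hF0 hb, mul_zero])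
      (fun l hl => by rw [meanCurvatureVector_of_lt hl, mul_zero]),
    sum_congr rfl htail, sum_Ico_metricWeight_mul_tail_sq hF hC hFb hbK,
    meanCurvatureVector_pred hb, meanCurvatureVector_of_le ha (by omega) (by omega)]
  obtain ⟨p, rfl⟩ : ∃ p, b = p + 1 := ⟨b - 1, by omega⟩
  rw [Nat.add_sub_cancel,
    metricWeight_mul_tail_mul_head (hF0 ▸ hF (by omega : 0 < p)) (hF p.lt_succ_self) hC]
  ring

end

end CalabiComposition

theorem stmt_16_general (r s : ℕ)
    (n : ℕ → ℕ)
    (f : ℕ → ℝ) (hf : ∀ b, f b = (b : ℝ) + ∑ i ∈ Finset.Icc 1 b, (n i : ℝ))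
    (C : ℝ) (hC : 0 < C)
    (L₁ : ℝ) (hL₁ : L₁ = -1 / (f (r + s) * C))
    (gmet : (ℕ → ℝ) → (ℕ → ℝ) → ℝ)
    (hg : ∀ u v : ℕ → ℝ, gmet u v = ∑ lam ∈ Finset.Icc 1 (r + s - 1),
      (f (lam + 1) * C / (((n (lam + 1) : ℝ) + 1) * f lam)) * u lam * v lam)
    (H : ℕ → ℕ → ℝ)
    (hH : ∀ α ∈ Finset.Icc 1 s, ∀ lam : ℕ, H α lam =
      (if lam = α + r - 1 then -(f (α + r - 1) / (f (α + r) * C)) else 0)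
      + (if α + r ≤ lam ∧ lam ≤ r + s - 1 then
          (1 / C) * (((n (lam + 1) : ℝ) + 1) / f (lam + 1)) else 0)) :
    (∀ α ∈ Finset.Icc 1 s,
      gmet (H α) (H α)
        = ((f (r + s) - 1 - (n (α + r) : ℝ)) / ((n (α + r) : ℝ) + 1)) * (-L₁))
    ∧ (∀ α ∈ Finset.Icc 1 s, ∀ β ∈ Finset.Icc 1 s, α ≠ β →
        gmet (H α) (H β) = L₁) := by
  have hgap : ∀ l, (n (l + 1) : ℝ) + 1 = f (l + 1) - f l := fun l => by
    rw [hf, hf, Finset.sum_Icc_succ_top (by omega)]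
    push_cast
    ring
  have hmono : StrictMono f := strictMono_nat_of_lt_succ fun l =>
    sub_pos.1 (hgap l ▸ by positivity)
  have hf0 : f 0 = 0 := by simp [hf]
  have hgmet : gmet = CalabiComposition.diagMetric f C (r + s) := by
    funext u v
    simp only [hg, hgap]
    rfl
  have hHα : ∀ α ∈ Finset.Icc 1 s,
      H α = CalabiComposition.meanCurvatureVector f C (r + s) (α + r) :=
    fun α hα => funext fun l => by rw [hH α hα l, hgap]; rfl
  refine ⟨fun α hα => ?_, fun α hα β hβ hne => ?_⟩
  · have hα' := Finset.mem_Icc.1 hα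
    have hgapα : (n (α + r) : ℝ) + 1 = f (α + r) - f (α + r - 1) := by
      simpa only [Nat.sub_add_cancel (by omega : 1 ≤ α + r)] using hgap (α + r - 1)
    have hK : 0 < f (r + s) := hf0 ▸ hmono (by omega : 0 < r + s)
    rw [hgmet, hHα α hα, CalabiComposition.diagMetric_meanCurvatureVector_self hmono hf0 hC.ne'
      (by omega) (by omega), hL₁, hgapα]
    have : f (α + r) - f (α + r - 1) ≠ 0 := hgapα ▸ by positivity
    field_simp
    linear_combination hgapα
  · wlog hlt : α < β generalizing α β
    · rw [hgmet, CalabiComposition.diagMetric_comm, ← hgmet]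
      exact this β hβ α hα hne.symm (by omega)
    have hα' := Finset.mem_Icc.1 hα
    have hβ' := Finset.mem_Icc.1 hβ
    rw [hgmet, hHα α hα, hHα β hβ, CalabiComposition.diagMetric_meanCurvatureVector_of_lt hmono
      hf0 hC.ne' (by omega) (by omega) (by omega), hL₁]
    ring

/-- Proposition 4.7(6): inner products of the mean-curvature vectors `H_α` of the Calabi
composition of `r` points and `s` hyperbolic affine hyperspheres, computed in the diagonal
metric `g(∂_λ, ∂_μ) = (f_{λ+1}C/((n_{λ+1}+1)f_λ)) δ_{λμ}`:
`g(H_α, H_α) = ((n−n_α)/(n_α+1))(−L₁)` and `g(H_α, H_β) = L₁` for `α ≠ β`. -/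
theorem stmt_16 (r s : ℕ) (hs : 1 ≤ s) (hK : 2 ≤ r + s)
    (n : ℕ → ℕ) (hn0 : ∀ a, 1 ≤ a → a ≤ r → n a = 0)
    (f : ℕ → ℝ) (hf : ∀ b, f b = (b : ℝ) + ∑ i ∈ Finset.Icc 1 b, (n i : ℝ))
    (C : ℝ) (hC : 0 < C)
    (L₁ : ℝ) (hL₁ : L₁ = -1 / (f (r + s) * C))
    (gmet : (ℕ → ℝ) → (ℕ → ℝ) → ℝ)
    (hg : ∀ u v : ℕ → ℝ, gmet u v = ∑ lam ∈ Finset.Icc 1 (r + s - 1),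
      (f (lam + 1) * C / (((n (lam + 1) : ℝ) + 1) * f lam)) * u lam * v lam)
    (H : ℕ → ℕ → ℝ)
    (hH : ∀ α ∈ Finset.Icc 1 s, ∀ lam : ℕ, H α lam =
      (if lam = α + r - 1 then -(f (α + r - 1) / (f (α + r) * C)) else 0)
      + (if α + r ≤ lam ∧ lam ≤ r + s - 1 then
          (1 / C) * (((n (lam + 1) : ℝ) + 1) / f (lam + 1)) else 0)) :
    (∀ α ∈ Finset.Icc 1 s,
      gmet (H α) (H α)
        = ((f (r + s) - 1 - (n (α + r) : ℝ)) / ((n (α + r) : ℝ) + 1)) * (-L₁))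
    ∧ (∀ α ∈ Finset.Icc 1 s, ∀ β ∈ Finset.Icc 1 s, α ≠ β →
        gmet (H α) (H β) = L₁) :=
  stmt_16_general r s n f hf C hC L₁ hL₁ gmet hg H hH
end
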